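/- Let δ ∈ (0,2) and β > 0, and let L : ℝ → ℝ be continuously differentiable with both |L(θ)| ≤ β·exp(|θ|^{2−δ}) and |L′(θ)| ≤ β·exp(|θ|^{2−δ}) for all θ ∈ ℝ. Then for every σ > 0 and every θ ∈ ℝ, the Randomized Gradient Smoothing estimator is unbiased: E_{ε ~ N(0,σ²)}[L′(θ + ε)] = L_σ′(θ), i.e. the Gaussian average of the gradient equals the gradient of the Gaussian smoothed loss. -/

import Mathlib

open MeasureTheory ProbabilityTheory Real
open scoped NNReal

private lemma rpow_le_linear {q η : ℝ} (hq0 : 0 ≤ q) (hq1 : q < 1) (hη : 0 < η) :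
    ∃ C : ℝ, 0 ≤ C ∧ ∀ s : ℝ, 0 ≤ s → s ^ q ≤ η * s + C := by
  set s0 : ℝ := η ^ (-(1 - q)⁻¹) with hs0
  have hs0pos : 0 < s0 := Real.rpow_pos_of_pos hη _
  refine ⟨s0 ^ q, Real.rpow_nonneg hs0pos.le _, fun s hs => ?_⟩
  rcases le_or_gt s s0 with h | h
  · have h1 : s ^ q ≤ s0 ^ q := Real.rpow_le_rpow hs h hq0
    nlinarith [mul_nonneg hη.le hs]
  · have hspos : 0 < s := hs0pos.trans h
    have h1 : s ^ q = s * s ^ (q - 1) := by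
      nth_rewrite 1 [show q = 1 + (q - 1) by ring]
      rw [Real.rpow_add hspos, Real.rpow_one]
    have h2 : s ^ (q - 1) ≤ s0 ^ (q - 1) :=
      Real.rpow_le_rpow_of_nonpos hs0pos h.le (by linarith)
    have h3 : s0 ^ (q - 1) = η := by
      rw [hs0, ← Real.rpow_mul hη.le]
      have h5 : -(1 - q)⁻¹ * (q - 1) = 1 := by
        have h4 : 1 - q ≠ 0 := by linarith
        field_simp
        ring
      rw [h5, Real.rpow_one]
    have h4 : s ^ q ≤ s * η := by
      rw [h1]
      exact mul_le_mul_of_nonneg_left (h2.trans_eq h3) hspos.le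
    nlinarith [Real.rpow_nonneg hs0pos.le q]

private lemma integrable_exp_rpow_gaussian (a p : ℝ) (ha : 0 ≤ a) (hp0 : 0 ≤ p)
    (hp2 : p < 2) (v : ℝ≥0) (hv : v ≠ 0) :
    Integrable (fun x : ℝ => Real.exp ((a + |x|) ^ p)) (gaussianReal 0 v) := by
  have hvpos : (0 : ℝ) < v := lt_of_le_of_ne v.coe_nonneg (by exact_mod_cast hv.symm)
  obtain ⟨C, hC0, hC⟩ := rpow_le_linear (q := p / 2) (η := (8 * (v:ℝ))⁻¹)
    (by linarith) (by linarith) (by positivity)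
  -- pointwise bound on the exponent
  have key : ∀ x : ℝ, (a + |x|) ^ p ≤ a ^ 2 / (4 * v) + x ^ 2 / (4 * v) + C := by
    intro x
    have hb : (0 : ℝ) ≤ a + |x| := by positivity
    have h1 : (a + |x|) ^ p = ((a + |x|) ^ 2) ^ (p / 2) := by
      rw [← Real.rpow_natCast (a + |x|) 2, ← Real.rpow_mul hb]
      congr 1
      push_cast
      ring
    have h2 : ((a + |x|) ^ 2 : ℝ) ^ (p / 2) ≤ (8 * (v:ℝ))⁻¹ * (a + |x|) ^ 2 + C :=
      hC _ (by positivity)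
    have h3 : ((a + |x|) : ℝ) ^ 2 ≤ 2 * a ^ 2 + 2 * x ^ 2 := by
      have := abs_nonneg x
      have hx2 : |x| ^ 2 = x ^ 2 := sq_abs x
      nlinarith [sq_nonneg (a - |x|)]
    have h4 : (8 * (v : ℝ))⁻¹ * (a + |x|) ^ 2 ≤ a ^ 2 / (4 * v) + x ^ 2 / (4 * v) := by
      rw [← add_div, div_eq_inv_mul]
      calc (8 * (v : ℝ))⁻¹ * (a + |x|) ^ 2 ≤ (8 * (v : ℝ))⁻¹ * (2 * a ^ 2 + 2 * x ^ 2) :=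
            mul_le_mul_of_nonneg_left h3 (by positivity)
        _ = (4 * (v : ℝ))⁻¹ * (a ^ 2 + x ^ 2) := by
            field_simp; ring
    calc (a + |x|) ^ p ≤ (8 * (v:ℝ))⁻¹ * (a + |x|) ^ 2 + C := h1 ▸ h2
      _ ≤ a ^ 2 / (4 * v) + x ^ 2 / (4 * v) + C := by linarith
  rw [gaussianReal_of_var_ne_zero 0 hv, gaussianPDF_def]
  rw [integrable_withDensity_iff (measurable_gaussianPDFReal 0 v).ennreal_ofReal
    (Filter.Eventually.of_forall fun x => ENNReal.ofReal_lt_top)]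
  have hcont : Continuous fun x : ℝ => Real.exp ((a + |x|) ^ p) := by
    apply Real.continuous_exp.comp
    exact (continuous_const.add continuous_abs).rpow_const fun x => Or.inr hp0
  refine Integrable.mono'
    ((integrable_exp_neg_mul_sq (b := (4 * (v : ℝ))⁻¹) (by positivity)).const_mul
      ((√(2 * π * v))⁻¹ * Real.exp (a ^ 2 / (4 * v) + C)))
    (hcont.aestronglyMeasurable.mul
      ((measurable_gaussianPDFReal 0 v).ennreal_ofReal.ennreal_toReal.aestronglyMeasurable))
    (Filter.Eventually.of_forall fun x => ?_)
  have hpdf : (ENNReal.ofReal (gaussianPDFReal 0 v x)).toReal = gaussianPDFReal 0 v x :=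
    ENNReal.toReal_ofReal (gaussianPDFReal_nonneg 0 v x)
  rw [Real.norm_eq_abs, hpdf, abs_of_nonneg
    (mul_nonneg (Real.exp_nonneg _) (gaussianPDFReal_nonneg 0 v x))]
  rw [gaussianPDFReal]
  have hsqrt : (0:ℝ) ≤ (√(2 * π * v))⁻¹ := by positivity
  calc Real.exp ((a + |x|) ^ p) * ((√(2 * π * ↑v))⁻¹ * Real.exp (-(x - 0) ^ 2 / (2 * ↑v)))
      = (√(2 * π * ↑v))⁻¹ * Real.exp ((a + |x|) ^ p + -(x - 0) ^ 2 / (2 * ↑v)) := by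
        rw [Real.exp_add]; ring
    _ ≤ (√(2 * π * ↑v))⁻¹ *
        Real.exp (a ^ 2 / (4 * v) + x ^ 2 / (4 * v) + C + -(x - 0) ^ 2 / (2 * ↑v)) := by
        apply mul_le_mul_of_nonneg_left _ hsqrt
        exact Real.exp_le_exp.2 (by linarith [key x])
    _ = (√(2 * π * ↑v))⁻¹ * Real.exp (a ^ 2 / (4 * ↑v) + C) *
        Real.exp (-(4 * ↑v)⁻¹ * x ^ 2) := by
        have hvne0 : (v:ℝ) ≠ 0 := hvpos.ne'
        have he : Real.exp (a ^ 2 / (4 * (v:ℝ)) + x ^ 2 / (4 * (v:ℝ)) + C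
              + -(x - 0) ^ 2 / (2 * (v:ℝ)))
            = Real.exp (a ^ 2 / (4 * (v:ℝ)) + C) * Real.exp (-(4 * (v:ℝ))⁻¹ * x ^ 2) := by
          rw [← Real.exp_add]
          congr 1
          field_simp
          ring
        rw [he]
        ring

/-- The Gaussian smoothing `L_σ(θ) = E_{ε ~ N(0,σ²)}[L (θ + ε)]` of a loss `L`. -/
noncomputable def gaussianSmoothing (L : ℝ → ℝ) (σ θ : ℝ) : ℝ :=
  ∫ ε, L (θ + ε) ∂(gaussianReal 0 ⟨σ ^ 2, sq_nonneg σ⟩)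

/-- If `L` is continuously differentiable and both `L` and `L′` satisfy
the growth bound, then the Randomized Gradient Smoothing estimator is unbiased:
`E_{ε ~ N(0,σ²)}[L′(θ + ε)] = L_σ′(θ)`. -/
theorem rgs_estimator_unbiased
    (δ β : ℝ) (hδ : δ ∈ Set.Ioo (0 : ℝ) 2) (hβ : 0 < β)
    (L : ℝ → ℝ) (hL : ContDiff ℝ 1 L)
    (hgrowth : ∀ θ : ℝ, |L θ| ≤ β * Real.exp (|θ| ^ (2 - δ)))
    (hgrowth' : ∀ θ : ℝ, |deriv L θ| ≤ β * Real.exp (|θ| ^ (2 - δ)))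
    (σ : ℝ) (hσ : 0 < σ) (θ : ℝ) :
    ∫ ε, deriv L (θ + ε) ∂(gaussianReal 0 ⟨σ ^ 2, sq_nonneg σ⟩) =
      deriv (fun t : ℝ => gaussianSmoothing L σ t) θ := by
  obtain ⟨hδ0, hδ2⟩ := hδ
  set p : ℝ := 2 - δ with hp
  have hp0 : 0 ≤ p := by simp [hp]; linarith
  have hp2 : p < 2 := by simp [hp]; linarith
  set v : ℝ≥0 := ⟨σ ^ 2, sq_nonneg σ⟩ with hv
  have hvne : v ≠ 0 := fun h => (pow_pos hσ 2).ne' (congrArg NNReal.toReal h)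
  set μ := gaussianReal 0 v with hμ
  -- the dominating bound
  set bd : ℝ → ℝ := fun x => β * Real.exp ((|θ| + 1 + |x|) ^ p) with hbd
  have hbd_int : Integrable bd μ :=
    (integrable_exp_rpow_gaussian (|θ| + 1) p (by positivity) hp0 hp2 v hvne).const_mul β
  have hmono : ∀ (x t : ℝ), |t + x| ≤ |θ| + 1 + |x| →
      β * Real.exp (|t + x| ^ p) ≤ bd x := by
    intro x t h
    exact mul_le_mul_of_nonneg_left
      (Real.exp_le_exp.2 (Real.rpow_le_rpow (abs_nonneg _) h hp0)) hβ.le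
  have hLd : Differentiable ℝ L := hL.differentiable one_ne_zero
  have hL'c : Continuous (deriv L) := hL.continuous_deriv le_rfl
  have key := hasDerivAt_integral_of_dominated_loc_of_deriv_le
    (F := fun t x => L (t + x)) (F' := fun t x => deriv L (t + x)) (x₀ := θ)
    (bound := bd) (μ := μ) (s := Metric.ball θ 1) (Metric.ball_mem_nhds θ one_pos)
    (Filter.Eventually.of_forall fun t =>
      (hL.continuous.comp (continuous_const.add continuous_id)).aestronglyMeasurable)
    ?_ ((hL'c.comp (continuous_const.add continuous_id)).aestronglyMeasurable) ?_ hbd_int ?_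
  · obtain ⟨-, hder⟩ := key
    exact (hder.deriv).symm
  · -- Integrable (fun x => L (θ + x)) μ
    refine hbd_int.mono'
      ((hL.continuous.comp (continuous_const.add continuous_id)).aestronglyMeasurable)
      (Filter.Eventually.of_forall fun x => ?_)
    rw [Real.norm_eq_abs]
    refine (hgrowth (θ + x)).trans (hmono x θ ?_)
    calc |θ + x| ≤ |θ| + |x| := abs_add_le _ _
      _ ≤ |θ| + 1 + |x| := by linarith
  · -- bound on the derivative on the ball
    refine Filter.Eventually.of_forall fun x => fun t ht => ?_
    rw [Real.norm_eq_abs]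
    refine (hgrowth' (t + x)).trans (hmono x t ?_)
    rw [Metric.mem_ball, Real.dist_eq] at ht
    calc |t + x| ≤ |t| + |x| := abs_add_le _ _
      _ ≤ |t - θ| + |θ| + |x| := by
          have := abs_sub_abs_le_abs_sub t θ
          linarith
      _ ≤ |θ| + 1 + |x| := by linarith
  · -- differentiability
    refine Filter.Eventually.of_forall fun x => fun t _ => ?_
    have h1 : HasDerivAt (fun s : ℝ => s + x) 1 t := (hasDerivAt_id t).add_const x
    have := (hLd (t + x)).hasDerivAt.comp t h1
    simpa [Function.comp_def] using this
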